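/- arXiv:math/0011072 — 2 statements merged into one kernel-verified Lean document; each statement's English description precedes it below -/
import Mathlib

section
/- Let T = ∪_{j=1}^p (T_j)_(u_j) be a good set of signed patterns (a disjoint union of homogeneous sets with distinct signs u_1,...,u_p ∈ {1,...,r}). Then |E_n^r(T)| = Σ_{j_1+...+j_p ≤ n} (r−p)^{n−j_1−...−j_p} · C(n; j_1,...,j_p, n−Σj_i)^2 · (n−j_1−...−j_p)! · Π_{i=1}^p |S_{j_i}(T_i)|. -/
open Finset Equiv

/-- A signed permutation of length `n` with `r` signs: a permutation of `Fin n`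
together with a sign in `Fin r` attached to each position. -/
abbrev SignedPerm (n r : ℕ) := Equiv.Perm (Fin n) × (Fin n → Fin r)

/-- `SPContains p x` : the signed permutation `x` contains the signed pattern `p`,
i.e. there is an increasing sequence of positions on which the symbols of `x` are
order-isomorphic to the symbols of `p` and the signs match exactly. -/
def SPContains {k n r : ℕ} (p : SignedPerm k r) (x : SignedPerm n r) : Prop :=
  ∃ f : Fin k → Fin n, StrictMono f ∧
    (∀ i j : Fin k, p.1 i < p.1 j ↔ x.1 (f i) < x.1 (f j)) ∧
    (∀ i : Fin k, x.2 (f i) = p.2 i)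

/-- Classical (unsigned) pattern containment for permutations. -/
def PContains {k m : ℕ} (τ : Equiv.Perm (Fin k)) (σ : Equiv.Perm (Fin m)) : Prop :=
  ∃ f : Fin k → Fin m, StrictMono f ∧ ∀ i j : Fin k, τ i < τ j ↔ σ (f i) < σ (f j)

open scoped Nat Function

/-! Fix the sign function `g`. Its blocks `g⁻¹(u i)` are disjoint, and right multiplication by
permutations acting inside one block at a time shows that the tuple of patterns of `π` on the
blocks is equidistributed over `∏ i, S_{j i}`; so the number of admissible `π` is
`n! / ∏ j_i! · ∏ |S_{j_i}(T_i)|`. Sign functions with block sizes `j` are the labelings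
`Fin n → Option (Fin p)` with these fiber sizes, counted by orbit–stabilizer as a multinomial
coefficient, times `(r - p) ^ (n - ∑ j)` choices of the remaining signs. -/

theorem card_fiber_mul_right_eq {G β : Type*} [Group G] [Fintype G] [DecidableEq β]
    (f : G → β) {b b₀ : β} (ρ : G) (hρ : ∀ g, f (g * ρ) = b ↔ f g = b₀) :
    #{g | f g = b} = #{g | f g = b₀} :=
  card_nbij' (· * ρ⁻¹) (· * ρ) (fun g hg => by simpa [← hρ] using hg)
    (fun g hg => by simpa [hρ] using hg) (fun g _ => by simp) (fun g _ => by simp)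

theorem card_filter_comp_eq_mul {α β : Type*} [Fintype α] [Fintype β] [DecidableEq β]
    (f : α → β) {d : ℕ} (hf : ∀ b, #{a | f a = b} = d) (Q : β → Prop) [DecidablePred Q] :
    #{a | Q (f a)} = #{b | Q b} * d := by
  rw [card_eq_sum_card_fiberwise (f := f) (t := {b | Q b}) (fun a ha => by simpa using ha),
    ← sum_const_nat fun b hb => ?_]
  rw [filter_filter, ← hf b]
  congr 1
  ext a
  simp only [mem_filter, mem_univ, true_and] at hb ⊢
  exact ⟨fun h => h.2, fun h => ⟨h ▸ hb, h⟩⟩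

namespace Equiv.Perm

variable {n : ℕ}

theorem eq_of_lt_iff_lt {m : ℕ} {σ τ : Perm (Fin m)} (h : ∀ a b, σ a < σ b ↔ τ a < τ b) :
    σ = τ := by
  have hmono : StrictMono (σ.symm.trans τ) := fun x y hxy => by
    simpa [← h] using hxy
  have hid : (σ.symm.trans τ : Fin m → Fin m) = id :=
    (hmono.range_inj strictMono_id).mp (by simp [Set.range_id])
  refine Equiv.ext fun a => ?_
  simpa using (congrFun hid (σ a)).symm

/-- The pattern of `π` on the positions `s`: the permutation of `Fin #s` order-isomorphic to
the restriction of `π` to `s`. -/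
noncomputable def pattern (π : Perm (Fin n)) (s : Finset (Fin n)) : Perm (Fin #s) :=
  ((s.orderIsoOfFin rfl).toEquiv.trans
    (π.subtypeEquiv fun _ => π.injective.mem_finset_image.symm)).trans
    ((s.image π).orderIsoOfFin (card_image_of_injective s π.injective)).toEquiv.symm

theorem pattern_lt_pattern_iff (π : Perm (Fin n)) (s : Finset (Fin n)) (a b : Fin #s) :
    π.pattern s a < π.pattern s b ↔
      π (s.orderEmbOfFin rfl a) < π (s.orderEmbOfFin rfl b) := by
  rw [← ((s.image π).orderIsoOfFin (card_image_of_injective s π.injective)).lt_iff_lt,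
    ← Subtype.coe_lt_coe]
  simp [pattern]

theorem pattern_congr {π π' : Perm (Fin n)} {s : Finset (Fin n)} (h : ∀ x ∈ s, π x = π' x) :
    π.pattern s = π'.pattern s :=
  eq_of_lt_iff_lt fun a b => by
    simp only [pattern_lt_pattern_iff, h _ (s.orderEmbOfFin_mem rfl _)]

theorem pattern_mul_viaEmbedding (π : Perm (Fin n)) (s : Finset (Fin n)) (σ : Perm (Fin #s)) :
    (π * σ.viaEmbedding (s.orderEmbOfFin rfl).toEmbedding).pattern s = π.pattern s * σ :=
  eq_of_lt_iff_lt fun a b => by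
    simp only [pattern_lt_pattern_iff, mul_apply]
    exact (viaEmbedding_apply σ _ a).symm ▸ (viaEmbedding_apply σ _ b).symm ▸ Iff.rfl

theorem pattern_mul_viaEmbedding_of_disjoint (π : Perm (Fin n)) {s t : Finset (Fin n)}
    (hst : _root_.Disjoint s t) (σ : Perm (Fin #s)) :
    (π * σ.viaEmbedding (s.orderEmbOfFin rfl).toEmbedding).pattern t = π.pattern t :=
  pattern_congr fun x hx => by
    rw [mul_apply, viaEmbedding_apply_of_notMem]
    simpa [range_orderEmbOfFin] using disjoint_right.mp hst hx

theorem exists_pattern_mul_eq {ι : Type*} [Fintype ι] [DecidableEq ι] (A : ι → Finset (Fin n))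
    (hA : Pairwise (_root_.Disjoint on A)) (σ : ∀ i, Perm (Fin #(A i))) :
    ∃ ρ : Perm (Fin n), ∀ π i, (π * ρ).pattern (A i) = π.pattern (A i) * σ i := by
  suffices ∀ S : Finset ι, ∃ ρ : Perm (Fin n), ∀ π i,
      (π * ρ).pattern (A i) = π.pattern (A i) * if i ∈ S then σ i else 1 by
    simpa using this univ
  intro S
  induction S using Finset.induction_on with
  | empty => exact ⟨1, by simp⟩
  | @insert a S ha ih =>
    obtain ⟨ρ, hρ⟩ := ih
    refine ⟨(σ a).viaEmbedding ((A a).orderEmbOfFin rfl).toEmbedding * ρ, fun π i => ?_⟩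
    rw [← mul_assoc, hρ]
    obtain rfl | hia := eq_or_ne i a
    · simp [pattern_mul_viaEmbedding, ha]
    · simp [pattern_mul_viaEmbedding_of_disjoint _ (hA hia.symm), hia]

end Equiv.Perm

theorem card_filter_pattern_mul_prod_factorial {n : ℕ} {ι : Type*} [Fintype ι] [DecidableEq ι]
    (A : ι → Finset (Fin n)) (hA : Pairwise (Disjoint on A))
    (Q : (∀ i, Perm (Fin #(A i))) → Prop) [DecidablePred Q] :
    #{π : Perm (Fin n) | Q fun i => π.pattern (A i)} * ∏ i, (#(A i))! = #{σ | Q σ} * n ! := by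
  set P : Perm (Fin n) → ∀ i, Perm (Fin #(A i)) := fun π i => π.pattern (A i)
  have hfiber : ∀ σ, #{π | P π = σ} = #{π | P π = 1} := fun σ => by
    obtain ⟨ρ, hρ⟩ := Perm.exists_pattern_mul_eq A hA σ
    exact card_fiber_mul_right_eq P ρ fun π => by simp [P, funext_iff, hρ]
  have hall := card_filter_comp_eq_mul P hfiber fun _ => True
  simp only [filter_true, card_univ, Fintype.card_perm, Fintype.card_fin, Fintype.card_pi]
    at hall
  rw [card_filter_comp_eq_mul P hfiber Q, hall]
  ring

theorem card_pattern_forall_mul_prod_factorial {n : ℕ} {ι : Type*} [Fintype ι] [DecidableEq ι]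
    (A : ι → Finset (Fin n)) (hA : Pairwise (Disjoint on A))
    (P : ∀ i, Perm (Fin #(A i)) → Prop) :
    Nat.card {π : Perm (Fin n) // ∀ i, P i (π.pattern (A i))} * ∏ i, (#(A i))! =
      (∏ i, Nat.card {σ // P i σ}) * n ! := by
  classical
  rw [← Nat.card_pi, ← Nat.card_congr subtypePiEquivPi]
  simp only [Nat.card_eq_fintype_card, Fintype.card_subtype]
  exact card_filter_pattern_mul_prod_factorial A hA fun σ => ∀ i, P i (σ i)

theorem spContains_const_iff {n k r : ℕ} (τ : Perm (Fin k)) (π : Perm (Fin n))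
    (g : Fin n → Fin r) (v : Fin r) :
    SPContains (τ, fun _ => v) (π, g) ↔ PContains τ (π.pattern {x | g x = v}) := by
  set s : Finset (Fin n) := {x | g x = v}
  constructor
  · rintro ⟨f, hf, hord, hsign⟩
    have hfs : ∀ i, f i ∈ s := fun i => by simpa [s] using hsign i
    set f' : Fin k → Fin #s := fun i => (s.orderIsoOfFin rfl).symm ⟨f i, hfs i⟩
    have hf' : ∀ i, s.orderEmbOfFin rfl (f' i) = f i := fun i => by
      simp [f', ← coe_orderIsoOfFin_apply]
    refine ⟨f', fun i j hij => ?_, fun i j => ?_⟩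
    · rw [← (s.orderEmbOfFin rfl).lt_iff_lt, hf', hf']
      exact hf hij
    · rw [Perm.pattern_lt_pattern_iff, hf', hf', hord]
  · rintro ⟨f, hf, hord⟩
    refine ⟨s.orderEmbOfFin rfl ∘ f, (s.orderEmbOfFin rfl).strictMono.comp hf,
      fun i j => by simp [hord, Perm.pattern_lt_pattern_iff], fun i => ?_⟩
    exact (mem_filter.mp (s.orderEmbOfFin_mem rfl (f i))).2

section Labelings

variable {α β : Type*} [Fintype α]

theorem card_fiber_comp_perm [DecidableEq β] (c : α → β) (π : Perm α) (b : β) :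
    #{x | c (π x) = b} = #{x | c x = b} :=
  card_nbij' π π.symm (fun x hx => by simpa using hx) (fun x hx => by simpa using hx)
    (fun x _ => by simp) (fun x _ => by simp)

theorem exists_perm_comp_eq [DecidableEq β] {c c' : α → β}
    (h : ∀ b, #{x | c x = b} = #{x | c' x = b}) : ∃ π : Perm α, c' ∘ π = c := by
  classical
  have e : ∀ b, {x // c x = b} ≃ {x // c' x = b} := fun b =>
    Fintype.equivOfCardEq (by simpa only [Fintype.card_subtype] using h b)
  exact ⟨(sigmaFiberEquiv c).symm.trans ((sigmaCongrRight e).trans (sigmaFiberEquiv c')),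
    funext fun x => (e (c x) ⟨x, rfl⟩).2⟩

theorem exists_card_fiber_eq [Fintype β] [DecidableEq β] (k : β → ℕ)
    (hk : ∑ b, k b = Fintype.card α) : ∃ c : α → β, ∀ b, #{x | c x = b} = k b := by
  obtain ⟨e⟩ : Nonempty (α ≃ Σ b, Fin (k b)) := Fintype.card_eq.mp (by simp [hk])
  refine ⟨fun x => (e x).1, fun b => ?_⟩
  rw [← Fintype.card_subtype, ← Fintype.card_fin (k b)]
  exact Fintype.card_congr ((e.subtypeEquiv fun _ => Iff.rfl).trans (sigmaSubtype b))

theorem card_filter_card_fiber_eq_mul_prod_factorial [DecidableEq α] [Fintype β] [DecidableEq β]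
    (k : β → ℕ) (hk : ∑ b, k b = Fintype.card α) :
    #{c : α → β | ∀ b, #{x | c x = b} = k b} * ∏ b, (k b)! = (Fintype.card α)! := by
  obtain ⟨c₀, hc₀⟩ := exists_card_fiber_eq k hk
  have hstab : #{π : Perm α | c₀ ∘ π = c₀} = ∏ b, (k b)! := by
    rw [← Fintype.card_subtype, DomMulAct.stabilizer_card]
    simp only [Fintype.card_subtype, hc₀]
  have hfiber : ∀ c ∈ ({c | ∀ b, #{x | c x = b} = k b} : Finset (α → β)),
      #{π : Perm α | c₀ ∘ π = c} = ∏ b, (k b)! := fun c hc => by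
    obtain ⟨π₀, hπ₀⟩ := exists_perm_comp_eq (c := c) (c' := c₀) fun b => by
      rw [(mem_filter.mp hc).2, hc₀]
    rw [← hstab]
    refine card_fiber_mul_right_eq (fun π : Perm α => c₀ ∘ π) π₀ fun π => ?_
    rw [← hπ₀, Perm.coe_mul, ← Function.comp_assoc]
    exact π₀.surjective.injective_comp_right.eq_iff
  rw [← Fintype.card_perm, ← card_univ, card_eq_sum_card_fiberwise (f := fun π : Perm α => c₀ ∘ π)
    (t := {c | ∀ b, #{x | c x = b} = k b}) fun π _ => by simp [card_fiber_comp_perm, hc₀],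
    sum_congr rfl fun c hc => by simpa using hfiber c hc, sum_const, smul_eq_mul]

end Labelings

section SignFunctions

variable {α β ι : Type*} [Fintype α] [Fintype ι] [DecidableEq ι]

theorem card_fiber_none_eq (c : α → Option ι) :
    #{x | c x = none} = Fintype.card α - ∑ i, #{x | c x = some i} := by
  have h := card_eq_sum_card_fiberwise (f := c) (s := univ) (t := univ) fun _ _ => mem_univ _
  rw [card_univ, Fintype.sum_option] at h
  omega

theorem card_filter_card_fiber_some_mul [DecidableEq α] (j : ι → ℕ)
    (hj : ∑ i, j i ≤ Fintype.card α) :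
    #{c : α → Option ι | ∀ i, #{x | c x = some i} = j i} *
      ((∏ i, (j i)!) * (Fintype.card α - ∑ i, j i)!) = (Fintype.card α)! := by
  set k : Option ι → ℕ := fun b => Option.elim b (Fintype.card α - ∑ i, j i) j
  have hfilter : ∀ c : α → Option ι,
      (∀ i, #{x | c x = some i} = j i) ↔ ∀ b, #{x | c x = b} = k b := fun c => by
    rw [Option.forall, card_fiber_none_eq c]
    exact ⟨fun h => ⟨by simp [k, h], h⟩, And.right⟩
  rw [filter_congr fun c _ => hfilter c,
    ← card_filter_card_fiber_eq_mul_prod_factorial k (by simp [k]; omega),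
    Fintype.prod_option, mul_comm (k none)!]
  rfl

theorem card_comp_eq [DecidableEq α] [Fintype β] {γ : Type*} [DecidableEq γ]
    (κ : β → γ) (c : α → γ) : #{g : α → β | κ ∘ g = c} = ∏ x, #{b | κ b = c x} := by
  simp only [← Fintype.card_subtype, ← Fintype.card_pi]
  exact Fintype.card_congr ((subtypeEquivRight fun g => funext_iff).trans
    (subtypePiEquivPi (p := fun x b => κ b = c x)))

theorem card_filter_card_fiber_apply_eq [DecidableEq α] [Fintype β] [DecidableEq β]
    {u : ι → β} (hu : Function.Injective u) (j : ι → ℕ) :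
    #{g : α → β | ∀ i, #{x | g x = u i} = j i} =
      #{c : α → Option ι | ∀ i, #{x | c x = some i} = j i} *
        (Fintype.card β - Fintype.card ι) ^ (Fintype.card α - ∑ i, j i) := by
  set κ : β → Option ι := Function.partialInv u
  have hκ : ∀ b i, κ b = some i ↔ u i = b := fun b i => hu.isPartialInv i b
  have hnone : #{b | κ b = none} = Fintype.card β - Fintype.card ι := by
    rw [← card_univ (α := ι), ← card_image_of_injective _ hu, ← card_compl]
    congr 1
    ext b
    simp [Option.eq_none_iff_forall_ne_some, hκ]
  have hsome : ∀ i, #{b | κ b = some i} = 1 := fun i => by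
    simp [hκ, eq_comm, filter_eq']
  have hcount : ∀ c : α → Option ι,
      #{g : α → β | κ ∘ g = c} = (Fintype.card β - Fintype.card ι) ^ #{x | c x = none} := by
    intro c
    have hsome' : ∏ x with ¬c x = none, #{b | κ b = c x} = 1 := prod_eq_one fun x hx => by
      obtain ⟨i, hi⟩ := Option.ne_none_iff_exists'.mp (mem_filter.mp hx).2
      rw [hi, hsome]
    rw [card_comp_eq, ← prod_filter_mul_prod_filter_not univ fun x => c x = none, hsome',
      prod_congr rfl fun x hx => by rw [(mem_filter.mp hx).2, hnone], prod_const, mul_one]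
  have hfiber : ∀ g : α → β, ∀ i, #{x | g x = u i} = #{x | (κ ∘ g) x = some i} := fun g i => by
    simp [hκ, eq_comm]
  simp only [hfiber]
  rw [card_eq_sum_card_fiberwise (f := (κ ∘ ·)) (t := {c | ∀ i, #{x | c x = some i} = j i})
    fun g hg => by simpa using hg, ← sum_const_nat fun c hc => ?_]
  have hc := (mem_filter.mp hc).2
  rw [filter_filter, filter_congr fun g _ => ⟨And.right, fun h => ⟨h ▸ hc, h⟩⟩, hcount,
    card_fiber_none_eq, funext hc]

end SignFunctions

theorem pairwise_disjoint_fiber_apply {α β ι : Type*} [Fintype α] [DecidableEq β]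
    {u : ι → β} (hu : Function.Injective u) (g : α → β) :
    Pairwise (Disjoint on fun i => ({x | g x = u i} : Finset α)) :=
  fun _ _ hii' => disjoint_filter.mpr fun _ _ h h' => hii' (hu (h.symm.trans h'))

theorem sum_card_fiber_apply_le {α β ι : Type*} [Fintype α] [DecidableEq α] [Fintype ι]
    [DecidableEq β] {u : ι → β} (hu : Function.Injective u) (g : α → β) :
    ∑ i, #{x | g x = u i} ≤ Fintype.card α := by
  rw [← card_biUnion ((pairwise_disjoint_fiber_apply hu g).set_pairwise _)]
  exact card_le_univ _

theorem card_fiber_apply_mem {n r p : ℕ} {u : Fin p → Fin r} (hu : Function.Injective u)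
    (g : Fin n → Fin r) : (fun i => #{x | g x = u i}) ∈
      (Fintype.piFinset fun _ : Fin p => range (n + 1)).filter (fun j => ∑ i, j i ≤ n) := by
  have hsum := sum_card_fiber_apply_le hu g
  rw [Fintype.card_fin] at hsum
  exact mem_filter.mpr ⟨Fintype.mem_piFinset.mpr fun i => mem_range_succ_iff.mpr
    ((single_le_sum (fun _ _ => Nat.zero_le _) (mem_univ i)).trans hsum), hsum⟩

-- Over `Fin p` the predicate `∀ i, …` is decided by `Nat.decidableForallFin`, not by the generic
-- instance used above, hence these restatements.
theorem card_fin_filter_card_fiber_some_mul {n p : ℕ} (j : Fin p → ℕ) (hj : ∑ i, j i ≤ n) :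
    #{c : Fin n → Option (Fin p) | ∀ i, #{x | c x = some i} = j i} *
      ((∏ i, (j i)!) * (n - ∑ i, j i)!) = n ! := by
  convert card_filter_card_fiber_some_mul (α := Fin n) j (by simpa using hj) <;> simp

theorem card_fin_filter_card_fiber_apply_eq {n r p : ℕ} {u : Fin p → Fin r}
    (hu : Function.Injective u) (j : Fin p → ℕ) :
    #{g : Fin n → Fin r | (fun i => #{x | g x = u i}) = j} =
      #{c : Fin n → Option (Fin p) | ∀ i, #{x | c x = some i} = j i} *
        (r - p) ^ (n - ∑ i, j i) := by
  convert card_filter_card_fiber_apply_eq (α := Fin n) hu j using 3 <;>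
    simp [funext_iff, Finset.ext_iff]

theorem card_avoid_eq_sum_sign {n r p : ℕ} {k : Fin p → ℕ} (T : ∀ i, Set (Perm (Fin (k i))))
    (u : Fin p → Fin r) :
    Nat.card {x : SignedPerm n r // ∀ i, ∀ τ ∈ T i, ¬ SPContains (τ, fun _ => u i) x} =
      ∑ g : Fin n → Fin r, Nat.card {π : Perm (Fin n) //
        ∀ i, ∀ τ ∈ T i, ¬ PContains τ (π.pattern {x | g x = u i})} := by
  rw [← Nat.card_sigma]
  refine Nat.card_congr
    { toFun x := ⟨x.1.2, x.1.1, by simpa only [← spContains_const_iff] using x.2⟩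
      invFun y := ⟨(y.2.1, y.1), by simpa only [spContains_const_iff] using y.2.2⟩
      left_inv _ := rfl
      right_inv _ := rfl }

theorem card_avoid_of_card_fiber_eq {n r p : ℕ} {k : Fin p → ℕ}
    (T : ∀ i, Set (Perm (Fin (k i)))) {u : Fin p → Fin r} (hu : Function.Injective u)
    {j : Fin p → ℕ} (hj : ∑ i, j i ≤ n) {g : Fin n → Fin r} (hg : ∀ i, #{x | g x = u i} = j i) :
    Nat.card {π : Perm (Fin n) // ∀ i, ∀ τ ∈ T i, ¬ PContains τ (π.pattern {x | g x = u i})} =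
      #{c : Fin n → Option (Fin p) | ∀ i, #{x | c x = some i} = j i} * (n - ∑ i, j i)! *
        ∏ i, Nat.card {σ : Perm (Fin (j i)) // ∀ τ ∈ T i, ¬ PContains τ σ} := by
  have hpat := card_pattern_forall_mul_prod_factorial _ (pairwise_disjoint_fiber_apply hu g)
    fun i σ => ∀ τ ∈ T i, ¬ PContains τ σ
  have hmult := card_fin_filter_card_fiber_some_mul j hj
  have havoid : ∀ i, Nat.card {σ : Perm (Fin #{x | g x = u i}) // ∀ τ ∈ T i, ¬ PContains τ σ} =
      Nat.card {σ : Perm (Fin (j i)) // ∀ τ ∈ T i, ¬ PContains τ σ} := fun i => by rw [hg i]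
  simp only [hg, havoid] at hpat
  refine Nat.eq_of_mul_eq_mul_right (m := ∏ i, (j i)!) (prod_pos fun i _ => (j i).factorial_pos) ?_
  rw [hpat, ← hmult]
  ring

/-- counting avoiders of a good set `T = ∪_{i} (T_i)_(u_i)`
(homogeneous parts with pairwise distinct signs `u i`). -/
theorem card_avoid_good_set (n r p : ℕ) (k : Fin p → ℕ)
    (T : ∀ i : Fin p, Set (Equiv.Perm (Fin (k i))))
    (u : Fin p → Fin r) (hu : Function.Injective u) :
    Nat.card {x : SignedPerm n r //
        ∀ i : Fin p, ∀ τ ∈ T i, ¬ SPContains (τ, fun _ => u i) x} =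
    ∑ j ∈ (Fintype.piFinset fun _ : Fin p => Finset.range (n + 1)).filter
        (fun j => ∑ i, j i ≤ n),
      (r - p) ^ (n - ∑ i, j i) *
        (n.factorial / ((∏ i, (j i).factorial) * (n - ∑ i, j i).factorial)) ^ 2 *
        (n - ∑ i, j i).factorial *
        ∏ i, Nat.card {σ : Equiv.Perm (Fin (j i)) // ∀ τ ∈ T i, ¬ PContains τ σ} := by
  rw [card_avoid_eq_sum_sign, ← sum_fiberwise_of_maps_to fun g _ => card_fiber_apply_mem hu g]
  refine sum_congr rfl fun j hj => ?_
  have hjn : ∑ i, j i ≤ n := (mem_filter.mp hj).2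
  rw [sum_congr rfl fun g hg => card_avoid_of_card_fiber_eq T hu hjn fun i =>
      congrFun (mem_filter.mp hg).2 i,
    sum_const, smul_eq_mul, card_fin_filter_card_fiber_apply_eq hu j,
    Nat.div_eq_of_eq_mul_left (by positivity) (card_fin_filter_card_fiber_some_mul j hjn).symm]
  ring
end

section
/- For every 2-letter signed pattern [τ]_a ∈ E_2^r (τ ∈ S_2, signs a ∈ {1,...,r}^2), the number of [τ]_a-avoiding signed permutations in E_n^r is Σ_{j=0}^n j! (r−1)^j C(n,j)^2. -/
open Finset Equiv

section Aux
variable {n r : ℕ}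

/-- bad pattern occurrence for pattern 12 with signs s,t -/
def Bad (s t : Fin r) (x : Equiv.Perm (Fin n) × (Fin n → Fin r)) : Prop :=
  ∃ i j : Fin n, i < j ∧ x.1 i < x.1 j ∧ x.2 i = s ∧ x.2 j = t

instance (s t : Fin r) (x : Equiv.Perm (Fin n) × (Fin n → Fin r)) : Decidable (Bad s t x) := by
  unfold Bad; infer_instance

/-- S is an "antichain" for σ : values decrease along S -/
def Anti (σ : Equiv.Perm (Fin n)) (S : Finset (Fin n)) : Prop :=
  ∀ i ∈ S, ∀ j ∈ S, i < j → ¬ σ i < σ j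

instance (σ : Equiv.Perm (Fin n)) (S : Finset (Fin n)) : Decidable (Anti σ S) := by
  unfold Anti; infer_instance

/-- strict up-set of S in the permutation 2-dim order -/
def Uset (σ : Equiv.Perm (Fin n)) (S : Finset (Fin n)) : Finset (Fin n) :=
  univ.filter (fun j => ∃ i ∈ S, i < j ∧ σ i < σ j)

/-- elements of W dominating some element of W -/
def Wplus (σ : Equiv.Perm (Fin n)) (W : Finset (Fin n)) : Finset (Fin n) :=
  W.filter (fun j => ∃ i ∈ W, i < j ∧ σ i < σ j)

lemma wplus_empty_iff (σ : Equiv.Perm (Fin n)) (W : Finset (Fin n)) :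
    Wplus σ W = ∅ ↔ Anti σ W := by
  simp only [Wplus, Anti, Finset.filter_eq_empty_iff]
  constructor
  · intro h i hi j hj hij hlt
    exact h hj ⟨i, hi, hij, hlt⟩
  · rintro h j hj ⟨i, hi, hij, hlt⟩
    exact h i hi j hj hij hlt

/-- two-variable powerset binomial sum -/
lemma Qsum {α : Type*} [DecidableEq α] (R : Finset α) (y z : ℤ) :
    ∑ T ∈ R.powerset, y ^ T.card * z ^ (R.card - T.card) = (y + z) ^ R.card := by
  have h := Finset.sum_powerset_apply_card (f := fun m => y ^ m * z ^ (R.card - m)) (x := R)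
  rw [h, add_pow]
  refine Finset.sum_congr rfl (fun m hm => ?_)
  rw [nsmul_eq_mul]
  ring

lemma wplus_witness (σ : Equiv.Perm (Fin n)) (W V : Finset (Fin n)) (hV : V ⊆ Wplus σ W)
    {v : Fin n} (hv : v ∈ V) : ∃ i ∈ W \ V, i < v ∧ σ i < σ v := by
  classical
  set D := W.filter (fun w => w < v ∧ σ w < σ v) with hD
  have hne : D.Nonempty := by
    have := hV hv
    simp only [Wplus, Finset.mem_filter] at this
    obtain ⟨-, i, hiW, hiv, hσ⟩ := this
    exact ⟨i, by simp [hD, hiW, hiv, hσ]⟩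
  obtain ⟨w0, hw0, hmin⟩ := D.exists_min_image id hne
  simp only [hD, Finset.mem_filter] at hw0
  refine ⟨w0, ?_, hw0.2.1, hw0.2.2⟩
  rw [Finset.mem_sdiff]
  refine ⟨hw0.1, fun hw0V => ?_⟩
  have := hV hw0V
  simp only [Wplus, Finset.mem_filter] at this
  obtain ⟨-, w', hw'W, hw'lt, hw'σ⟩ := this
  have hw'D : w' ∈ D := by
    simp [hD, hw'W, lt_trans hw'lt hw0.2.1, lt_trans hw'σ hw0.2.2]
  exact absurd (hmin w' hw'D) (by simpa using hw'lt)

lemma identity_int (σ : Equiv.Perm (Fin n)) (x : ℤ) :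
    ∑ S : Finset (Fin n), ∑ T ∈ ((S ∪ Uset σ S)ᶜ).powerset, x ^ (n - S.card - T.card)
    = ∑ S ∈ univ.filter (Anti σ), (x + 1) ^ (n - S.card) := by
  classical
  have cardfact : ∀ S : Finset (Fin n),
      S.card + (Uset σ S \ S).card + ((S ∪ Uset σ S)ᶜ).card = n := by
    intro S
    have h1 : S.card + (Uset σ S \ S).card = (S ∪ Uset σ S).card := by
      rw [← Finset.card_union_of_disjoint Finset.disjoint_sdiff,
        Finset.union_sdiff_self_eq_union]
    rw [h1, Finset.card_add_card_compl, Fintype.card_fin]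
  have step1 : ∀ S : Finset (Fin n),
      ∑ T ∈ ((S ∪ Uset σ S)ᶜ).powerset, x ^ (n - S.card - T.card)
      = ∑ V ∈ (Uset σ S \ S).powerset, (-1 : ℤ) ^ V.card * (x + 1) ^ (n - (S ∪ V).card) := by
    intro S
    have hcf := cardfact S
    have e1 : ∑ T ∈ ((S ∪ Uset σ S)ᶜ).powerset, x ^ (n - S.card - T.card)
        = x ^ (Uset σ S \ S).card * (x + 1) ^ ((S ∪ Uset σ S)ᶜ).card := by
      have key : ∀ T ∈ ((S ∪ Uset σ S)ᶜ).powerset, x ^ (n - S.card - T.card)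
          = x ^ (Uset σ S \ S).card * (1 ^ T.card * x ^ (((S ∪ Uset σ S)ᶜ).card - T.card)) := by
        intro T hT
        rw [Finset.mem_powerset] at hT
        have hTc := Finset.card_le_card hT
        have he : n - S.card - T.card
            = (Uset σ S \ S).card + (((S ∪ Uset σ S)ᶜ).card - T.card) := by omega
        rw [he, pow_add, one_pow, one_mul]
      rw [Finset.sum_congr rfl key, ← Finset.mul_sum, Qsum]
      ring_nf
    have e2 : (x : ℤ) ^ (Uset σ S \ S).card = ∑ V ∈ (Uset σ S \ S).powerset,
        (-1 : ℤ) ^ V.card * (x + 1) ^ ((Uset σ S \ S).card - V.card) := by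
      rw [Qsum (Uset σ S \ S) (-1) (x + 1)]
      ring_nf
    rw [e1, e2, Finset.sum_mul]
    refine Finset.sum_congr rfl (fun V hV => ?_)
    rw [Finset.mem_powerset] at hV
    have hVc := Finset.card_le_card hV
    have hdisj : Disjoint S V :=
      Finset.disjoint_left.mpr (fun a ha hav => (Finset.mem_sdiff.mp (hV hav)).2 ha)
    have hcard : (S ∪ V).card = S.card + V.card := Finset.card_union_of_disjoint hdisj
    have he : (Uset σ S \ S).card - V.card + ((S ∪ Uset σ S)ᶜ).card
        = n - (S ∪ V).card := by omega
    rw [mul_assoc, ← pow_add, he]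
  rw [Finset.sum_congr rfl (fun S _ => step1 S)]
  rw [← Finset.sum_sigma (univ : Finset (Finset (Fin n)))
      (fun S => (Uset σ S \ S).powerset)
      (fun p => (-1 : ℤ) ^ p.2.card * (x + 1) ^ (n - (p.1 ∪ p.2).card))]
  have reix : ∑ p ∈ (univ : Finset (Finset (Fin n))).sigma
        (fun S => (Uset σ S \ S).powerset),
        (-1 : ℤ) ^ p.2.card * (x + 1) ^ (n - (p.1 ∪ p.2).card)
      = ∑ q ∈ (univ : Finset (Finset (Fin n))).sigma (fun W => (Wplus σ W).powerset),
        (-1 : ℤ) ^ q.2.card * (x + 1) ^ (n - q.1.card) := by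
    refine Finset.sum_nbij' (fun p => ⟨p.1 ∪ p.2, p.2⟩) (fun q => ⟨q.1 \ q.2, q.2⟩)
      ?_ ?_ ?_ ?_ ?_
    · rintro ⟨S, V⟩ hp
      simp only [Finset.mem_sigma, Finset.mem_powerset, Finset.mem_univ, true_and] at hp ⊢
      intro v hv
      have hv' := hp hv
      rw [Finset.mem_sdiff, Uset, Finset.mem_filter] at hv'
      obtain ⟨⟨-, i, hiS, hilt, hiσ⟩, -⟩ := hv'
      rw [Wplus, Finset.mem_filter]
      exact ⟨Finset.mem_union_right _ hv, i, Finset.mem_union_left _ hiS, hilt, hiσ⟩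
    · rintro ⟨W, V⟩ hq
      simp only [Finset.mem_sigma, Finset.mem_powerset, Finset.mem_univ, true_and] at hq ⊢
      intro v hv
      obtain ⟨i, hi, hilt, hiσ⟩ := wplus_witness σ W V hq hv
      rw [Finset.mem_sdiff]
      constructor
      · rw [Uset, Finset.mem_filter]
        exact ⟨Finset.mem_univ _, i, hi, hilt, hiσ⟩
      · intro hvmem
        exact (Finset.mem_sdiff.mp hvmem).2 hv
    · rintro ⟨S, V⟩ hp
      simp only [Finset.mem_sigma, Finset.mem_powerset, Finset.mem_univ, true_and] at hp
      have hdisj : Disjoint S V :=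
        Finset.disjoint_left.mpr (fun a ha hav => (Finset.mem_sdiff.mp (hp hav)).2 ha)
      simp only [Sigma.mk.inj_iff, heq_eq_eq, and_true]
      exact Finset.union_sdiff_cancel_right hdisj
    · rintro ⟨W, V⟩ hq
      simp only [Finset.mem_sigma, Finset.mem_powerset, Finset.mem_univ, true_and] at hq
      have hVW : V ⊆ W := hq.trans (Finset.filter_subset _ _)
      simp only [Sigma.mk.inj_iff, heq_eq_eq, and_true]
      exact Finset.sdiff_union_of_subset hVW
    · rintro ⟨S, V⟩ hp
      rfl
  rw [reix, Finset.sum_sigma, Finset.sum_filter]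
  refine Finset.sum_congr rfl (fun W _ => ?_)
  have hfac : ∑ V ∈ (Wplus σ W).powerset, (-1 : ℤ) ^ V.card * (x + 1) ^ (n - W.card)
      = (∑ V ∈ (Wplus σ W).powerset, (-1 : ℤ) ^ V.card) * (x + 1) ^ (n - W.card) := by
    rw [Finset.sum_mul]
  rw [hfac, Finset.sum_powerset_neg_one_pow_card]
  by_cases h : Anti σ W
  · rw [if_pos ((wplus_empty_iff σ W).mpr h), if_pos h, one_mul]
  · rw [if_neg (fun he => h ((wplus_empty_iff σ W).mp he)), if_neg h, zero_mul]

lemma card_pi_pred {m : ℕ} (P : Fin n → Fin m → Prop) [∀ i c, Decidable (P i c)] :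
    (univ.filter fun b : Fin n → Fin m => ∀ i, P i (b i)).card
      = ∏ i, (univ.filter fun c => P i c).card := by
  rw [← Fintype.card_subtype, Fintype.card_congr (Equiv.subtypePiEquivPi (p := P)),
    Fintype.card_pi]
  exact Finset.prod_congr rfl fun i _ => Fintype.card_subtype _

lemma card_fiber_single (s : Fin r) (S : Finset (Fin n)) :
    (univ.filter fun b : Fin n → Fin r => ∀ i, (b i = s ↔ i ∈ S)).card
      = (r - 1) ^ (n - S.card) := by
  rw [card_pi_pred (P := fun i c => c = s ↔ i ∈ S)]
  have key : ∀ i : Fin n, (univ.filter fun c : Fin r => c = s ↔ i ∈ S).card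
      = if i ∈ S then 1 else r - 1 := by
    intro i
    by_cases h : i ∈ S
    · simp only [h, if_true, iff_true]
      rw [Finset.filter_eq']
      simp
    · simp only [h, if_false, iff_false]
      have : (univ.filter fun c : Fin r => ¬ c = s) = {s}ᶜ := by
        ext c; simp
      rw [this, Finset.card_compl, Finset.card_singleton, Fintype.card_fin]
  rw [Finset.prod_congr rfl fun i _ => key i, Finset.prod_ite, Finset.prod_const_one,
    Finset.prod_const, one_mul]
  congr 1
  rw [Finset.filter_not, Finset.filter_mem_eq_inter, Finset.univ_inter,
    Finset.card_sdiff_of_subset (Finset.subset_univ _), Finset.card_univ, Fintype.card_fin]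

lemma card_fiber_pair (s t : Fin r) (hst : s ≠ t) (S T : Finset (Fin n)) (hd : Disjoint S T) :
    (univ.filter fun b : Fin n → Fin r =>
        ∀ i, ((b i = s ↔ i ∈ S) ∧ (b i = t ↔ i ∈ T))).card
      = (r - 2) ^ (n - S.card - T.card) := by
  rw [card_pi_pred (P := fun i c => (c = s ↔ i ∈ S) ∧ (c = t ↔ i ∈ T))]
  have key : ∀ i : Fin n, (univ.filter fun c : Fin r =>
      (c = s ↔ i ∈ S) ∧ (c = t ↔ i ∈ T)).card = if i ∈ S ∪ T then 1 else r - 2 := by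
    intro i
    by_cases hS : i ∈ S
    · have hT : i ∉ T := Finset.disjoint_left.mp hd hS
      simp only [hS, hT, iff_true, iff_false, Finset.mem_union, true_or, if_true]
      have : (univ.filter fun c : Fin r => c = s ∧ ¬ c = t) = {s} := by
        ext c
        simp only [Finset.mem_filter, Finset.mem_univ, true_and, Finset.mem_singleton]
        constructor
        · exact fun h => h.1
        · rintro rfl; exact ⟨rfl, hst⟩
      rw [this, Finset.card_singleton]
    · by_cases hT : i ∈ T
      · simp only [hS, hT, iff_true, iff_false, Finset.mem_union, or_true, if_true]
        have : (univ.filter fun c : Fin r => ¬ c = s ∧ c = t) = {t} := by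
          ext c
          simp only [Finset.mem_filter, Finset.mem_univ, true_and, Finset.mem_singleton]
          constructor
          · exact fun h => h.2
          · rintro rfl; exact ⟨fun h => hst h.symm, rfl⟩
        rw [this, Finset.card_singleton]
      · simp only [hS, hT, iff_false, Finset.mem_union, or_self, if_false]
        have : (univ.filter fun c : Fin r => ¬ c = s ∧ ¬ c = t) = ({s, t} : Finset (Fin r))ᶜ := by
          ext c
          simp [not_or]
        rw [this, Finset.card_compl, Fintype.card_fin, Finset.card_pair hst]
  rw [Finset.prod_congr rfl fun i _ => key i, Finset.prod_ite, Finset.prod_const_one,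
    Finset.prod_const, one_mul]
  congr 1
  rw [Finset.filter_not, Finset.filter_mem_eq_inter, Finset.univ_inter,
    Finset.card_sdiff_of_subset (Finset.subset_univ _), Finset.card_univ, Fintype.card_fin,
    Finset.card_union_of_disjoint hd]
  omega

lemma fib_eq (b : Fin n → Fin r) (s : Fin r) (S : Finset (Fin n)) :
    (univ.filter (fun i => b i = s) = S) ↔ ∀ i, (b i = s ↔ i ∈ S) := by
  constructor
  · intro h i
    rw [← h]
    simp
  · intro h
    ext i
    simp [h i]

lemma countA (σ : Equiv.Perm (Fin n)) (s : Fin r) :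
    (univ.filter fun b : Fin n → Fin r => ¬ Bad s s (σ, b)).card
      = ∑ S ∈ univ.filter (Anti σ), (r - 1) ^ (n - S.card) := by
  classical
  rw [Finset.card_eq_sum_card_fiberwise
    (f := fun b : Fin n → Fin r => univ.filter (fun i => b i = s)) (t := univ)
    (fun _ _ => Finset.mem_univ _)]
  rw [Finset.sum_filter]
  refine Finset.sum_congr rfl fun S _ => ?_
  rw [Finset.filter_filter]
  by_cases h : Anti σ S
  · rw [if_pos h, ← card_fiber_single s S]
    congr 1
    ext b
    simp only [Finset.mem_filter, Finset.mem_univ, true_and]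
    constructor
    · rintro ⟨-, hf⟩
      exact (fib_eq b s S).mp hf
    · intro hf
      refine ⟨?_, (fib_eq b s S).mpr hf⟩
      rintro ⟨i, j, hij, hσ, hbi, hbj⟩
      exact h i ((hf i).mp hbi) j ((hf j).mp hbj) hij hσ
  · rw [if_neg h, Finset.card_eq_zero]
    rw [Finset.filter_eq_empty_iff]
    rintro b - ⟨hnb, hf⟩
    rw [fib_eq] at hf
    refine h (fun i hi j hj hij hσ => ?_)
    exact hnb ⟨i, j, hij, hσ, (hf i).mpr hi, (hf j).mpr hj⟩

lemma countB (σ : Equiv.Perm (Fin n)) (s t : Fin r) (hst : s ≠ t) :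
    (univ.filter fun b : Fin n → Fin r => ¬ Bad s t (σ, b)).card
      = ∑ S : Finset (Fin n), ∑ T ∈ ((S ∪ Uset σ S)ᶜ).powerset,
          (r - 2) ^ (n - S.card - T.card) := by
  classical
  rw [Finset.card_eq_sum_card_fiberwise
    (f := fun b : Fin n → Fin r => univ.filter (fun i => b i = s)) (t := univ)
    (fun _ _ => Finset.mem_univ _)]
  refine Finset.sum_congr rfl fun S _ => ?_
  rw [Finset.card_eq_sum_card_fiberwise
    (f := fun b : Fin n → Fin r => univ.filter (fun i => b i = t)) (t := univ)
    (fun _ _ => Finset.mem_univ _)]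
  rw [← Finset.univ_inter (((S ∪ Uset σ S)ᶜ).powerset), ← Finset.sum_ite_mem]
  refine Finset.sum_congr rfl fun T _ => ?_
  rw [Finset.filter_filter, Finset.filter_filter]
  by_cases h : T ∈ ((S ∪ Uset σ S)ᶜ).powerset
  · rw [if_pos h]
    rw [Finset.mem_powerset] at h
    have hd : Disjoint S T := by
      rw [Finset.disjoint_right]
      intro a haT haS
      have := h haT
      rw [Finset.mem_compl] at this
      exact this (Finset.mem_union_left _ haS)
    rw [← card_fiber_pair s t hst S T hd]
    congr 1
    ext b
    simp only [Finset.mem_filter, Finset.mem_univ, true_and]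
    constructor
    · rintro ⟨-, hfs, hft⟩
      rw [fib_eq] at hfs hft
      exact fun i => ⟨hfs i, hft i⟩
    · intro hf
      have hfs : ∀ i, b i = s ↔ i ∈ S := fun i => (hf i).1
      have hft : ∀ i, b i = t ↔ i ∈ T := fun i => (hf i).2
      refine ⟨?_, (fib_eq b s S).mpr hfs, (fib_eq b t T).mpr hft⟩
      rintro ⟨i, j, hij, hσ, hbi, hbj⟩
      have hjT : j ∈ T := (hft j).mp hbj
      have hjU : j ∈ S ∪ Uset σ S := Finset.mem_union_right _ (by
        rw [Uset, Finset.mem_filter]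
        exact ⟨Finset.mem_univ _, i, (hfs i).mp hbi, hij, hσ⟩)
      exact Finset.mem_compl.mp (h hjT) hjU
  · rw [if_neg h, Finset.card_eq_zero, Finset.filter_eq_empty_iff]
    rintro b - ⟨hnb, hfs, hft⟩
    rw [fib_eq] at hfs hft
    rw [Finset.mem_powerset] at h
    obtain ⟨j, hjT, hjn⟩ := Finset.not_subset.mp h
    rw [Finset.mem_compl, not_not] at hjn
    rcases Finset.mem_union.mp hjn with hjS | hjU
    · exact hst (((hfs j).mpr hjS).symm.trans ((hft j).mpr hjT))
    · rw [Uset, Finset.mem_filter] at hjU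
      obtain ⟨-, i, hiS, hij, hσ⟩ := hjU
      exact hnb ⟨i, j, hij, hσ, (hfs i).mpr hiS, (hft j).mpr hjT⟩

lemma image_compl_perm (σ : Equiv.Perm (Fin n)) (S : Finset (Fin n)) :
    (Sᶜ).image σ = (S.image σ)ᶜ := by
  ext a
  simp only [Finset.mem_image, Finset.mem_compl]
  constructor
  · rintro ⟨i, hi, rfl⟩ ⟨j, hj, hja⟩
    exact hi (σ.injective hja ▸ hj)
  · intro h
    exact ⟨σ.symm a, fun hmem => h ⟨σ.symm a, hmem, σ.apply_symm_apply a⟩,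
      σ.apply_symm_apply a⟩

/-- a permutation decreasing on `S` is determined on `S` by its image of `S` -/
lemma anti_eqOn (S : Finset (Fin n)) (σ τ : Equiv.Perm (Fin n))
    (hσ : Anti σ S) (hτ : Anti τ S) (himg : S.image σ = S.image τ)
    {i : Fin n} (hi : i ∈ S) : σ i = τ i := by
  classical
  have key : ∀ ρ : Equiv.Perm (Fin n), Anti ρ S → ∀ h : (S.image ρ).card = S.card,
      ∀ t : Fin S.card, ρ (S.orderEmbOfFin rfl t.rev) = (S.image ρ).orderEmbOfFin h t := by
    intro ρ hρ h t
    have hmono : StrictMono (fun t : Fin S.card => ρ (S.orderEmbOfFin rfl t.rev)) := by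
      intro t₁ t₂ hlt
      have h1 : t₂.rev < t₁.rev := by rw [Fin.rev_lt_rev]; exact hlt
      have h2 : S.orderEmbOfFin rfl t₂.rev < S.orderEmbOfFin rfl t₁.rev :=
        (S.orderEmbOfFin rfl).strictMono h1
      have hm1 : (S.orderEmbOfFin rfl) t₁.rev ∈ S := Finset.orderEmbOfFin_mem S rfl _
      have hm2 : (S.orderEmbOfFin rfl) t₂.rev ∈ S := Finset.orderEmbOfFin_mem S rfl _
      have hne : ρ (S.orderEmbOfFin rfl t₂.rev) ≠ ρ (S.orderEmbOfFin rfl t₁.rev) :=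
        fun he => (ne_of_lt h2) (ρ.injective he)
      exact lt_of_le_of_ne (not_lt.mp (hρ _ hm2 _ hm1 h2)) hne.symm
    have hfs : ∀ t : Fin S.card, ρ (S.orderEmbOfFin rfl t.rev) ∈ S.image ρ :=
      fun t => Finset.mem_image_of_mem ρ (Finset.orderEmbOfFin_mem S rfl _)
    have := Finset.orderEmbOfFin_unique h hfs hmono
    exact congrFun this t
  have hcσ : (S.image σ).card = S.card := Finset.card_image_of_injective _ σ.injective
  have hcτ : (S.image τ).card = S.card := Finset.card_image_of_injective _ τ.injective
  obtain ⟨t, ht⟩ : ∃ t : Fin S.card, S.orderEmbOfFin rfl t = i := by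
    have : i ∈ Set.range (S.orderEmbOfFin rfl) := by
      rw [Finset.range_orderEmbOfFin]; exact hi
    exact this
  have h1 := key σ hσ hcσ t.rev
  have h2 := key τ hτ hcτ t.rev
  rw [Fin.rev_rev, ht] at h1 h2
  rw [h1, h2]
  exact congrFun (congrArg
    (fun p : {V : Finset (Fin n) // V.card = S.card} => ⇑(p.1.orderEmbOfFin p.2))
    (Subtype.ext himg : (⟨S.image σ, hcσ⟩ : {V : Finset (Fin n) // V.card = S.card})
      = ⟨S.image τ, hcτ⟩)) t.rev

lemma exists_anti_extend (S : Finset (Fin n)) (g : (Sᶜ : Finset (Fin n)) ↪ Fin n) :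
    ∃ σ : Equiv.Perm (Fin n), Anti σ S ∧ ∀ i : (Sᶜ : Finset (Fin n)), σ i = g i := by
  classical
  have hle : S.card ≤ n := by
    simpa using Finset.card_le_univ S
  have himgcard : (univ.image g).card = n - S.card := by
    rw [Finset.card_image_of_injective _ g.injective, Finset.card_univ, Fintype.card_coe,
      Finset.card_compl, Fintype.card_fin]
  have hV : ((univ.image g)ᶜ : Finset (Fin n)).card = S.card := by
    rw [Finset.card_compl, Fintype.card_fin, himgcard]
    omega
  set F : Fin n → Fin n := fun i =>
    if h : i ∈ S then
      ((univ.image g)ᶜ).orderEmbOfFin hV (Fin.rev ((S.orderIsoOfFin rfl).symm ⟨i, h⟩))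
    else g ⟨i, Finset.mem_compl.mpr h⟩ with hF
  have hFS : ∀ i (h : i ∈ S), F i =
      ((univ.image g)ᶜ).orderEmbOfFin hV (Fin.rev ((S.orderIsoOfFin rfl).symm ⟨i, h⟩)) := by
    intro i h; simp only [hF, dif_pos h]
  have hFc : ∀ i (h : i ∉ S), F i = g ⟨i, Finset.mem_compl.mpr h⟩ := by
    intro i h; simp only [hF, dif_neg h]
  have hFmemV : ∀ i (h : i ∈ S), F i ∈ ((univ.image g)ᶜ : Finset (Fin n)) := by
    intro i h; rw [hFS i h]; exact Finset.orderEmbOfFin_mem _ hV _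
  have hFmemI : ∀ i (h : i ∉ S), F i ∈ univ.image g := by
    intro i h; rw [hFc i h]; exact Finset.mem_image_of_mem _ (Finset.mem_univ _)
  have hinj : Function.Injective F := by
    intro i₁ i₂ he
    by_cases h₁ : i₁ ∈ S <;> by_cases h₂ : i₂ ∈ S
    · rw [hFS i₁ h₁, hFS i₂ h₂] at he
      have := Fin.rev_injective ((((univ.image g)ᶜ).orderEmbOfFin hV).injective he)
      have := (S.orderIsoOfFin rfl).symm.injective this
      exact congrArg Subtype.val this
    · exact absurd (hFmemI i₂ h₂) (he ▸ Finset.mem_compl.mp (hFmemV i₁ h₁))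
    · exact absurd (hFmemI i₁ h₁) (he ▸ Finset.mem_compl.mp (hFmemV i₂ h₂))
    · rw [hFc i₁ h₁, hFc i₂ h₂] at he
      exact congrArg Subtype.val (g.injective he)
  refine ⟨Equiv.ofBijective F (Finite.injective_iff_bijective.mp hinj), ?_, ?_⟩
  · intro i hi j hj hij hlt
    have hidx : (S.orderIsoOfFin rfl).symm ⟨i, hi⟩ < (S.orderIsoOfFin rfl).symm ⟨j, hj⟩ := by
      rw [OrderIso.lt_iff_lt]
      exact Subtype.mk_lt_mk.mpr hij
    have hrev : Fin.rev ((S.orderIsoOfFin rfl).symm ⟨j, hj⟩)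
        < Fin.rev ((S.orderIsoOfFin rfl).symm ⟨i, hi⟩) := by
      rw [Fin.rev_lt_rev]; exact hidx
    have : F j < F i := by
      rw [hFS i hi, hFS j hj]
      exact (((univ.image g)ᶜ).orderEmbOfFin hV).strictMono hrev
    have hlt' : F i < F j := hlt
    exact absurd hlt' (not_lt.mpr this.le)
  · intro i
    have : F i = g ⟨(i : Fin n), Finset.mem_compl.mpr (Finset.mem_compl.mp i.2)⟩ :=
      hFc i (Finset.mem_compl.mp i.2)
    rw [show (Equiv.ofBijective F (Finite.injective_iff_bijective.mp hinj)) i = F i from rfl,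
      this]

lemma countAnti (S : Finset (Fin n)) :
    (univ.filter fun σ : Equiv.Perm (Fin n) => Anti σ S).card
      = n.choose S.card * (n - S.card).factorial := by
  classical
  have hle : S.card ≤ n := by simpa using Finset.card_le_univ S
  rw [← Fintype.card_subtype]
  have hbij : Function.Bijective
      (fun σp : {σ : Equiv.Perm (Fin n) // Anti σ S} =>
        (⟨fun i : (Sᶜ : Finset (Fin n)) => σp.1 i,
          fun i₁ i₂ he => Subtype.ext (σp.1.injective he)⟩ :
          (Sᶜ : Finset (Fin n)) ↪ Fin n)) := by
    constructor
    · rintro ⟨σ, hσ⟩ ⟨τ, hτ⟩ hab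
      have heq : ∀ i : (Sᶜ : Finset (Fin n)), σ i = τ i := fun i =>
        congrFun (congrArg (fun e => e.toFun) hab) i
      have himg : S.image σ = S.image τ := by
        have hc : (Sᶜ).image σ = (Sᶜ).image τ := by
          apply Finset.image_congr
          intro a ha
          exact heq ⟨a, ha⟩
        have e1 := image_compl_perm σ S
        have e2 := image_compl_perm τ S
        rw [e1, e2] at hc
        exact compl_injective hc
      refine Subtype.ext (Equiv.ext fun i => ?_)
      by_cases hi : i ∈ S
      · exact anti_eqOn S σ τ hσ hτ himg hi
      · exact heq ⟨i, Finset.mem_compl.mpr hi⟩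
    · intro g
      obtain ⟨σ, hσ, hres⟩ := exists_anti_extend S g
      refine ⟨⟨σ, hσ⟩, ?_⟩
      apply Function.Embedding.ext
      intro i
      exact hres i
  rw [Fintype.card_of_bijective hbij, Fintype.card_embedding_eq, Fintype.card_coe,
    Finset.card_compl, Fintype.card_fin]
  have h1 := Nat.factorial_mul_descFactorial (Nat.sub_le n S.card)
  rw [Nat.sub_sub_self hle] at h1
  have h2 := Nat.choose_mul_factorial_mul_factorial hle
  refine Nat.eq_of_mul_eq_mul_left (Nat.factorial_pos S.card) ?_
  rw [h1, ← h2]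
  ring

lemma sum_anti_count :
    ∑ σ : Equiv.Perm (Fin n), ∑ S ∈ univ.filter (Anti σ), (r - 1) ^ (n - S.card)
      = ∑ j ∈ Finset.range (n + 1), j.factorial * (r - 1) ^ j * (n.choose j) ^ 2 := by
  classical
  have swap1 : ∑ σ : Equiv.Perm (Fin n), ∑ S ∈ univ.filter (Anti σ), (r - 1) ^ (n - S.card)
      = ∑ S : Finset (Fin n), (univ.filter fun σ : Equiv.Perm (Fin n) => Anti σ S).card
          * (r - 1) ^ (n - S.card) := by
    simp only [Finset.sum_filter]
    rw [Finset.sum_comm]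
    refine Finset.sum_congr rfl fun S _ => ?_
    rw [← Finset.sum_filter, Finset.sum_const, smul_eq_mul]
  rw [swap1]
  have swap2 : ∀ S : Finset (Fin n),
      (univ.filter fun σ : Equiv.Perm (Fin n) => Anti σ S).card * (r - 1) ^ (n - S.card)
      = n.choose S.card * ((n - S.card).factorial * (r - 1) ^ (n - S.card)) := by
    intro S
    rw [countAnti, mul_assoc]
  rw [Finset.sum_congr rfl fun S _ => swap2 S]
  have huniv : (univ : Finset (Finset (Fin n))) = (univ : Finset (Fin n)).powerset := by
    rw [Finset.powerset_univ]
  rw [huniv]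
  have h := Finset.sum_powerset_apply_card
    (f := fun m => n.choose m * ((n - m).factorial * (r - 1) ^ (n - m)))
    (x := (univ : Finset (Fin n)))
  rw [h]
  simp only [Finset.card_univ, Fintype.card_fin, smul_eq_mul]
  rw [← Finset.sum_range_reflect]
  refine Finset.sum_congr rfl fun j hj => ?_
  rw [Finset.mem_range, Nat.lt_succ_iff] at hj
  have hidx : n + 1 - 1 - j = n - j := by omega
  rw [hidx, Nat.sub_sub_self hj, Nat.choose_symm hj]
  ring

lemma coreBad (s t : Fin r) :
    Nat.card {x : Equiv.Perm (Fin n) × (Fin n → Fin r) // ¬ Bad s t x}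
      = ∑ j ∈ Finset.range (n + 1), j.factorial * (r - 1) ^ j * (n.choose j) ^ 2 := by
  classical
  rw [Nat.card_eq_fintype_card,
    Fintype.card_congr (Equiv.subtypeProdEquivSigmaSubtype fun σ b => ¬ Bad s t (σ, b)),
    Fintype.card_sigma]
  have percard : ∀ σ : Equiv.Perm (Fin n),
      Fintype.card {b : Fin n → Fin r // ¬ Bad s t (σ, b)}
        = (univ.filter fun b : Fin n → Fin r => ¬ Bad s t (σ, b)).card := by
    intro σ
    rw [Fintype.card_subtype]
  rw [Finset.sum_congr rfl fun σ _ => percard σ]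
  by_cases hst : s = t
  · subst hst
    rw [Finset.sum_congr rfl fun σ _ => countA σ s]
    exact sum_anti_count
  · have hr2 : 2 ≤ r := by
      have hs := s.isLt
      have ht := t.isLt
      have hv : s.val ≠ t.val := fun h => hst (Fin.ext h)
      omega
    rw [Finset.sum_congr rfl fun σ _ => countB σ s t hst]
    rw [← sum_anti_count]
    refine Finset.sum_congr rfl fun σ _ => ?_
    have key := identity_int (n := n) σ ((r : ℤ) - 2)
    have hx : ((r - 2 : ℕ) : ℤ) = (r : ℤ) - 2 := by
      push_cast [Nat.cast_sub hr2]; ring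
    have hx1 : ((r - 1 : ℕ) : ℤ) = (r : ℤ) - 2 + 1 := by
      push_cast [Nat.cast_sub (by omega : 1 ≤ r)]; ring
    have cast1 : ((∑ S : Finset (Fin n), ∑ T ∈ ((S ∪ Uset σ S)ᶜ).powerset,
        (r - 2) ^ (n - S.card - T.card) : ℕ) : ℤ)
        = ∑ S : Finset (Fin n), ∑ T ∈ ((S ∪ Uset σ S)ᶜ).powerset,
          ((r : ℤ) - 2) ^ (n - S.card - T.card) := by
      push_cast [hx]
      rfl
    have cast2 : ((∑ S ∈ univ.filter (Anti σ), (r - 1) ^ (n - S.card) : ℕ) : ℤ)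
        = ∑ S ∈ univ.filter (Anti σ), ((r : ℤ) - 2 + 1) ^ (n - S.card) := by
      push_cast [hx1]
      rfl
    have : ((∑ S : Finset (Fin n), ∑ T ∈ ((S ∪ Uset σ S)ᶜ).powerset,
        (r - 2) ^ (n - S.card - T.card) : ℕ) : ℤ)
        = ((∑ S ∈ univ.filter (Anti σ), (r - 1) ^ (n - S.card) : ℕ) : ℤ) := by
      rw [cast1, cast2, key]
    exact_mod_cast this

def BadG (s t : Fin r) (x : Equiv.Perm (Fin n) × (Fin n → Fin r)) : Prop :=
  ∃ i j : Fin n, i < j ∧ x.1 j < x.1 i ∧ x.2 i = s ∧ x.2 j = t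

lemma sp_iff_lt (τ : Equiv.Perm (Fin 2)) (hτ : τ 0 < τ 1) (a : Fin 2 → Fin r)
    (x : Equiv.Perm (Fin n) × (Fin n → Fin r)) :
    SPContains (τ, a) x ↔ Bad (a 0) (a 1) x := by
  constructor
  · rintro ⟨f, hmono, hiso, hsign⟩
    exact ⟨f 0, f 1, hmono (by decide : (0 : Fin 2) < 1), (hiso 0 1).mp hτ,
      hsign 0, hsign 1⟩
  · rintro ⟨i, j, hij, hσ, hbi, hbj⟩
    refine ⟨![i, j], ?_, ?_, ?_⟩
    · intro u v huv
      fin_cases u <;> fin_cases v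
      · exact absurd huv (lt_irrefl _)
      · simpa using hij
      · exact absurd huv (by decide)
      · exact absurd huv (lt_irrefl _)
    · intro u v
      fin_cases u <;> fin_cases v <;>
        simp only [Matrix.cons_val_zero, Matrix.cons_val_one, Matrix.head_cons]
      · exact iff_of_false (lt_irrefl _) (lt_irrefl _)
      · exact iff_of_true hτ hσ
      · exact iff_of_false (lt_asymm hτ) (lt_asymm hσ)
      · exact iff_of_false (lt_irrefl _) (lt_irrefl _)
    · intro u
      fin_cases u
      · simpa using hbi
      · simpa using hbj

lemma sp_iff_gt (τ : Equiv.Perm (Fin 2)) (hτ : τ 1 < τ 0) (a : Fin 2 → Fin r)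
    (x : Equiv.Perm (Fin n) × (Fin n → Fin r)) :
    SPContains (τ, a) x ↔ BadG (a 0) (a 1) x := by
  constructor
  · rintro ⟨f, hmono, hiso, hsign⟩
    exact ⟨f 0, f 1, hmono (by decide : (0 : Fin 2) < 1), (hiso 1 0).mp hτ,
      hsign 0, hsign 1⟩
  · rintro ⟨i, j, hij, hσ, hbi, hbj⟩
    refine ⟨![i, j], ?_, ?_, ?_⟩
    · intro u v huv
      fin_cases u <;> fin_cases v
      · exact absurd huv (lt_irrefl _)
      · simpa using hij
      · exact absurd huv (by decide)
      · exact absurd huv (lt_irrefl _)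
    · intro u v
      fin_cases u <;> fin_cases v <;>
        simp only [Matrix.cons_val_zero, Matrix.cons_val_one, Matrix.head_cons]
      · exact iff_of_false (lt_irrefl _) (lt_irrefl _)
      · exact iff_of_false (lt_asymm hτ) (lt_asymm hσ)
      · exact iff_of_true hτ hσ
      · exact iff_of_false (lt_irrefl _) (lt_irrefl _)
    · intro u
      fin_cases u
      · simpa using hbi
      · simpa using hbj

lemma badG_card (s t : Fin r) :
    Nat.card {x : Equiv.Perm (Fin n) × (Fin n → Fin r) // ¬ BadG s t x}
      = Nat.card {x : Equiv.Perm (Fin n) × (Fin n → Fin r) // ¬ Bad s t x} := by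
  apply Nat.card_congr
  refine Equiv.subtypeEquiv
    (Equiv.prodCongr (Equiv.mulLeft (Fin.revPerm : Equiv.Perm (Fin n))) (Equiv.refl _)) ?_
  intro x
  apply not_congr
  constructor
  · rintro ⟨i, j, hij, hσ, hbi, hbj⟩
    refine ⟨i, j, hij, ?_, hbi, hbj⟩
    show Fin.revPerm (x.1 i) < Fin.revPerm (x.1 j)
    simpa [Fin.rev_lt_rev] using hσ
  · rintro ⟨i, j, hij, hσ, hbi, hbj⟩
    refine ⟨i, j, hij, ?_, hbi, hbj⟩
    have : Fin.revPerm (x.1 i) < Fin.revPerm (x.1 j) := hσ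
    simpa [Fin.rev_lt_rev] using this

theorem card_avoid_two_letter' (n r : ℕ) (τ : Equiv.Perm (Fin 2)) (a : Fin 2 → Fin r) :
    Nat.card {x : Equiv.Perm (Fin n) × (Fin n → Fin r) // ¬ SPContains (τ, a) x} =
      ∑ j ∈ Finset.range (n + 1), j.factorial * (r - 1) ^ j * (n.choose j) ^ 2 := by
  have hne : τ 0 ≠ τ 1 := fun h => absurd (τ.injective h) (by decide)
  rcases lt_or_gt_of_ne hne with hτ | hτ
  · rw [Nat.card_congr (Equiv.subtypeEquivRight
      (fun x => not_congr (sp_iff_lt τ hτ a x)))]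
    exact coreBad (a 0) (a 1)
  · rw [Nat.card_congr (Equiv.subtypeEquivRight
      (fun x => not_congr (sp_iff_gt τ hτ a x))), badG_card]
    exact coreBad (a 0) (a 1)

end Aux

/-- Main Theorem, part (i): for every 2-letter signed pattern
`[τ]_a`, `|E_n^r([τ]_a)| = Σ_{j=0}^n j! (r-1)^j C(n,j)^2`. -/
theorem card_avoid_two_letter (n r : ℕ) (τ : Equiv.Perm (Fin 2)) (a : Fin 2 → Fin r) :
    Nat.card {x : SignedPerm n r // ¬ SPContains (τ, a) x} =
      ∑ j ∈ Finset.range (n + 1), j.factorial * (r - 1) ^ j * (n.choose j) ^ 2 := by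
  have hne : τ 0 ≠ τ 1 := fun h => absurd (τ.injective h) (by decide)
  rcases lt_or_gt_of_ne hne with hτ | hτ
  · rw [Nat.card_congr (Equiv.subtypeEquivRight
      (fun x => not_congr (sp_iff_lt τ hτ a x)))]
    exact coreBad (a 0) (a 1)
  · rw [Nat.card_congr (Equiv.subtypeEquivRight
      (fun x => not_congr (sp_iff_gt τ hτ a x))), badG_card]
    exact coreBad (a 0) (a 1)
end
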